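/- arXiv:1907.04469 — 4 statements merged into one kernel-verified Lean document; each statement's English description precedes it below -/
import Mathlib

section
/- Let A be an m×n real matrix, and let θ, ρ, r, s be real numbers with ρ ≤ 1, r > 0, s > 0, and r·s > ‖AᵀA‖₂ (the spectral norm of AᵀA). Then the (n+m)×(n+m) block matrix G = [[r·Iₙ + ((θ−1)² − ρ)/s · AᵀA, (θ−1)·Aᵀ], [(θ−1)·A, s·I_m]] is symmetric positive definite. -/
/-!
The Schur complement of the block `s • 1` in `G` is `r • 1 - (ρ / s) • (Aᵀ * A)`, because the
`(θ - 1)²` terms cancel. It is positive definite: for `u ≠ 0`,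
`ρ ‖Au‖² ≤ ‖Au‖² ≤ N ‖u‖² < r s ‖u‖²`. A Hermitian block matrix with positive definite lower-right
block and positive definite Schur complement is positive definite.
-/

open Matrix

namespace Matrix

variable {m n R : Type*} [Fintype m] [Fintype n]

theorem PosDef.fromBlocks₂₂_of_schur [CommRing R] [PartialOrder R] [StarRing R]
    [StarOrderedRing R] [DecidableEq n] {A : Matrix m m R} {B : Matrix m n R}
    {D : Matrix n n R} (hD : D.PosDef) [Invertible D] (hS : (A - B * D⁻¹ * Bᴴ).PosDef) :
    (fromBlocks A B Bᴴ D).PosDef := by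
  refine .of_dotProduct_mulVec_pos ((IsHermitian.fromBlocks₂₂ A B hD.1).2 hS.1) fun z hz => ?_
  rw [dotProduct_mulVec, ← Sum.elim_comp_inl_inr z, schur_complement_eq₂₂ A B _ _ hD.1,
    ← dotProduct_mulVec, ← dotProduct_mulVec]
  by_cases hx : z ∘ Sum.inl = 0
  · have hy : z ∘ Sum.inr ≠ 0 := fun hy =>
      hz (by rw [← Sum.elim_comp_inl_inr z, hx, hy]; ext (i | i) <;> rfl)
    simpa [hx] using hD.dotProduct_mulVec_pos hy
  · exact add_pos_of_nonneg_of_pos (hD.posSemidef.dotProduct_mulVec_nonneg _)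
      (hS.dotProduct_mulVec_pos hx)

theorem mulVec_dotProduct_mulVec_le {A : Matrix m n ℝ} {N : ℝ}
    (hN : N ∈ upperBounds {t | ∃ u : n → ℝ, u ⬝ᵥ u = 1 ∧ t = A *ᵥ u ⬝ᵥ A *ᵥ u}) (u : n → ℝ) :
    A *ᵥ u ⬝ᵥ A *ᵥ u ≤ N * (u ⬝ᵥ u) := by
  rcases eq_or_ne u 0 with rfl | hu
  · simp
  have hpos : 0 < u ⬝ᵥ u := dotProduct_self_star_pos_iff.mpr hu
  set c := √(u ⬝ᵥ u)
  have hc : c ^ 2 = u ⬝ᵥ u := Real.sq_sqrt hpos.le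
  have hcpos : 0 < c := Real.sqrt_pos.mpr hpos
  have hunit := hN ⟨c⁻¹ • u, by simp [smul_dotProduct, dotProduct_smul, ← hc]; field_simp, rfl⟩
  simp only [mulVec_smul, smul_dotProduct, dotProduct_smul, smul_eq_mul] at hunit
  rw [← hc]
  field_simp at hunit
  linarith

theorem posDef_smul_one_sub_div_smul_transpose_mul_self [DecidableEq n] {A : Matrix m n ℝ}
    {N ρ r s : ℝ} (hN : N ∈ upperBounds {t | ∃ u : n → ℝ, u ⬝ᵥ u = 1 ∧ t = A *ᵥ u ⬝ᵥ A *ᵥ u})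
    (hρ : ρ ≤ 1) (hs : 0 < s) (hrs : N < r * s) :
    (r • (1 : Matrix n n ℝ) - (ρ / s) • (Aᵀ * A)).PosDef := by
  refine .of_dotProduct_mulVec_pos ?_ fun u hu => ?_
  · simp [IsHermitian, transpose_sub, transpose_smul]
  have hquad : star u ⬝ᵥ (r • (1 : Matrix n n ℝ) - (ρ / s) • (Aᵀ * A)) *ᵥ u
      = r * (u ⬝ᵥ u) - ρ / s * (A *ᵥ u ⬝ᵥ A *ᵥ u) := by
    simp only [star_trivial, sub_mulVec, smul_mulVec, one_mulVec, ← mulVec_mulVec, dotProduct_sub,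
      dotProduct_smul, smul_eq_mul, dotProduct_mulVec u Aᵀ, vecMul_transpose]
  have ha : 0 < u ⬝ᵥ u := dotProduct_self_star_pos_iff.mpr hu
  have hb : 0 ≤ A *ᵥ u ⬝ᵥ A *ᵥ u := dotProduct_star_self_nonneg _
  have hbound := mulVec_dotProduct_mulVec_le hN u
  rw [hquad, sub_pos, div_mul_eq_mul_div, div_lt_iff₀ hs]
  nlinarith

end Matrix

/-- `N = ‖AᵀA‖₂ = λ_max(AᵀA)` is encoded as the largest value of `‖Au‖²` on the unit sphere. -/
theorem stmt0_proximal_matrix_posDef_general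
    (m n : ℕ) (A : Matrix (Fin m) (Fin n) ℝ) (θ ρ r s N : ℝ)
    (hρ : ρ ≤ 1) (hs : 0 < s)
    (hN : IsGreatest {t : ℝ | ∃ u : Fin n → ℝ, u ⬝ᵥ u = 1 ∧ t = A.mulVec u ⬝ᵥ A.mulVec u} N)
    (hrs : N < r * s) :
    (Matrix.fromBlocks
      (r • (1 : Matrix (Fin n) (Fin n) ℝ) + (((θ - 1) ^ 2 - ρ) / s) • (Aᵀ * A))
      ((θ - 1) • Aᵀ)
      ((θ - 1) • A)
      (s • (1 : Matrix (Fin m) (Fin m) ℝ))).PosDef := by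
  have hD : (s • (1 : Matrix (Fin m) (Fin m) ℝ)).PosDef := PosDef.one.smul hs
  have := hD.isUnit.invertible
  have hD_inv : (s • (1 : Matrix (Fin m) (Fin m) ℝ))⁻¹ = s⁻¹ • 1 :=
    inv_eq_left_inv (by rw [smul_mul_smul_comm, inv_mul_cancel₀ hs.ne', one_mul, one_smul])
  have hB : ((θ - 1) • Aᵀ)ᴴ = (θ - 1) • A := by
    rw [conjTranspose_eq_transpose_of_trivial, transpose_smul, transpose_transpose]
  have hschur : r • (1 : Matrix (Fin n) (Fin n) ℝ) + (((θ - 1) ^ 2 - ρ) / s) • (Aᵀ * A)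
        - (θ - 1) • Aᵀ * (s • (1 : Matrix (Fin m) (Fin m) ℝ))⁻¹ * (θ - 1) • A
      = r • 1 - (ρ / s) • (Aᵀ * A) := by
    simp only [hD_inv, Matrix.mul_smul, Matrix.smul_mul, Matrix.mul_one]
    module
  have hS := posDef_smul_one_sub_div_smul_transpose_mul_self hN.2 hρ hs hrs
  rw [← hschur, ← hB] at hS
  have hG := PosDef.fromBlocks₂₂_of_schur hD hS
  rwa [hB] at hG

/-- The multi-parameterized proximal matrix `G` of the paper is symmetric
positive definite whenever `ρ ≤ 1`, `r > 0`, `s > 0` and `r·s > ‖AᵀA‖₂`,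
where the spectral norm `N = ‖AᵀA‖₂ = λ_max(AᵀA)` is characterized as the
greatest value of the Rayleigh quotient `‖Au‖²` over unit vectors `u`. -/
theorem stmt0_proximal_matrix_posDef
    (m n : ℕ) (A : Matrix (Fin m) (Fin n) ℝ) (θ ρ r s N : ℝ)
    (hρ : ρ ≤ 1) (hr : 0 < r) (hs : 0 < s)
    (hN : IsGreatest {t : ℝ | ∃ u : Fin n → ℝ, u ⬝ᵥ u = 1 ∧ t = A.mulVec u ⬝ᵥ A.mulVec u} N)
    (hrs : N < r * s) :
    (Matrix.fromBlocks
      (r • (1 : Matrix (Fin n) (Fin n) ℝ) + (((θ - 1) ^ 2 - ρ) / s) • (Aᵀ * A))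
      ((θ - 1) • Aᵀ)
      ((θ - 1) • A)
      (s • (1 : Matrix (Fin m) (Fin m) ℝ))).PosDef :=
  stmt0_proximal_matrix_posDef_general m n A θ ρ r s N hρ hs hN hrs
end

section
/- Let G̃ be symmetric positive semidefinite on ℝ^d and let w*, w^k, w̃^k ∈ ℝ^d satisfy ⟨w* − w̃^k, G̃(w^{k+1} − w^k)⟩ ≥ 0, where w^{k+1} = w^k − σ(w^k − w̃^k) with σ ∈ (0, 2). Then ‖w* − w^{k+1}‖²_{G̃} ≤ ‖w* − w^k‖²_{G̃} − ((2 − σ)/σ)‖w^k − w^{k+1}‖²_{G̃}. -/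
open Matrix

/-- Contraction step: if `⟨w* − w̃^k, G̃(w^{k+1} − w^k)⟩ ≥ 0` where
`w^{k+1} = w^k − σ(w^k − w̃^k)`, `σ ∈ (0,2)` and `G̃` is symmetric positive
semidefinite, then
`‖w* − w^{k+1}‖²_{G̃} ≤ ‖w* − w^k‖²_{G̃} − ((2 − σ)/σ)‖w^k − w^{k+1}‖²_{G̃}`. -/
theorem stmt4_contraction_step
    (k : ℕ) (Gt : Matrix (Fin k) (Fin k) ℝ) (hG : Gt.PosSemidef)
    (σ : ℝ) (hσ0 : 0 < σ) (hσ2 : σ < 2)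
    (ws w0 wt w1 : Fin k → ℝ) (hstep : w1 = w0 - σ • (w0 - wt))
    (h : 0 ≤ (ws - wt) ⬝ᵥ Gt.mulVec (w1 - w0)) :
    (ws - w1) ⬝ᵥ Gt.mulVec (ws - w1)
      ≤ ((ws - w0) ⬝ᵥ Gt.mulVec (ws - w0))
        - ((2 - σ) / σ) * ((w0 - w1) ⬝ᵥ Gt.mulVec (w0 - w1)) := by
  have hsymm : ∀ a b : Fin k → ℝ, a ⬝ᵥ Gt.mulVec b = b ⬝ᵥ Gt.mulVec a := by
    intro a b
    rw [Matrix.dotProduct_mulVec, ← Matrix.mulVec_transpose]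
    rw [show Gtᵀ = Gt from hG.1]
    exact dotProduct_comm _ _
  subst hstep
  have key : ws - (w0 - σ • (w0 - wt)) = (ws - w0) + σ • (w0 - wt) := by
    ext i; simp; ring
  have key2 : w0 - (w0 - σ • (w0 - wt)) = σ • (w0 - wt) := by ext i; simp
  have key3 : (w0 - σ • (w0 - wt)) - w0 = -(σ • (w0 - wt)) := by ext i; simp
  rw [key3] at h
  rw [key, key2] 
  set a := ws - w0 with ha
  set u := w0 - wt with hu
  have hwswt : ws - wt = a + u := by ext i; simp [ha, hu]
  rw [hwswt] at h
  simp only [Matrix.mulVec_add, Matrix.mulVec_smul, Matrix.mulVec_neg,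
    add_dotProduct, smul_dotProduct, dotProduct_add,
    dotProduct_smul, neg_dotProduct, dotProduct_neg,
    smul_eq_mul] at *
  have hs : u ⬝ᵥ Gt.mulVec a = a ⬝ᵥ Gt.mulVec u := hsymm u a
  have hqu : 0 ≤ u ⬝ᵥ Gt.mulVec u := hG.dotProduct_mulVec_nonneg u
  have hdiv : (2 - σ) / σ * σ = 2 - σ := div_mul_cancel₀ _ (ne_of_gt hσ0)
  have hrw : (2 - σ) / σ * (σ * (σ * (u ⬝ᵥ Gt.mulVec u))) = (2 - σ) * σ * (u ⬝ᵥ Gt.mulVec u) := by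
    field_simp
  nlinarith [h, hrw, hs, hqu, hσ0]
end

section
/- Under the setting of Lemma 1: let G̃ be symmetric, ρ ≤ 1, s > 0, σ ∈ (0,2), w^{k+1} = w^k − σ(w^k − w̃^k) componentwise (with x-components x^{k+1} = x^k − σ(x^k − x̃^k)), and suppose ⟨w* − w̃^k, G̃(w^{k+1} − w^k)⟩ + ((1−ρ)/s)⟨Ax* − Ax̃^k, Ax^{k+1} − Ax^k⟩ ≥ 0. Then ‖w^{k+1} − w*‖²_{G̃} + ((1−ρ)/s)‖A(x^{k+1} − x*)‖² ≤ ‖w^k − w*‖²_{G̃} + ((1−ρ)/s)‖A(x^k − x*)‖² − T_{k+1}, where T_{k+1} = ((2−σ)/σ)‖w^k − w^{k+1}‖²_{G̃} + ((1−ρ)(2−σ))/(sσ)·‖A(x^k − x^{k+1})‖². -/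
open Matrix

/-- Key contraction inequality (Lemma 1).  With `w = (x, λ)` split as
`Sum.elim x λ`, the relaxation step `w^{k+1} = w^k − σ(w^k − w̃^k)`, `σ ∈ (0,2)`,
`ρ ≤ 1`, `s > 0`, a symmetric `G̃`, and the hypothesis
`⟨w* − w̃^k, G̃(w^{k+1} − w^k)⟩ + ((1−ρ)/s)⟨Ax* − Ax̃^k, Ax^{k+1} − Ax^k⟩ ≥ 0`,
one has
`‖w^{k+1} − w*‖²_{G̃} + ((1−ρ)/s)‖A(x^{k+1} − x*)‖²
  ≤ ‖w^k − w*‖²_{G̃} + ((1−ρ)/s)‖A(x^k − x*)‖² − T_{k+1}` with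
`T_{k+1} = ((2−σ)/σ)‖w^k − w^{k+1}‖²_{G̃} + ((1−ρ)(2−σ))/(sσ)·‖A(x^k − x^{k+1})‖²`. -/
theorem stmt9_lemma1_contraction
    (m n : ℕ) (A : Matrix (Fin m) (Fin n) ℝ)
    (Gt : Matrix (Fin n ⊕ Fin m) (Fin n ⊕ Fin m) ℝ) (hGt : Gt.IsSymm)
    (ρ s σ : ℝ) (hρ : ρ ≤ 1) (hs : 0 < s) (hσ0 : 0 < σ) (hσ2 : σ < 2)
    (xs x0 xt x1 : Fin n → ℝ) (ls l0 lt l1 : Fin m → ℝ)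
    (hx : x1 = x0 - σ • (x0 - xt)) (hl : l1 = l0 - σ • (l0 - lt))
    (h : 0 ≤ (Sum.elim xs ls - Sum.elim xt lt) ⬝ᵥ
            Gt.mulVec (Sum.elim x1 l1 - Sum.elim x0 l0)
          + ((1 - ρ) / s) * ((A.mulVec xs - A.mulVec xt) ⬝ᵥ (A.mulVec x1 - A.mulVec x0))) :
    (Sum.elim x1 l1 - Sum.elim xs ls) ⬝ᵥ Gt.mulVec (Sum.elim x1 l1 - Sum.elim xs ls)
        + ((1 - ρ) / s) * (A.mulVec (x1 - xs) ⬝ᵥ A.mulVec (x1 - xs))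
      ≤ (Sum.elim x0 l0 - Sum.elim xs ls) ⬝ᵥ Gt.mulVec (Sum.elim x0 l0 - Sum.elim xs ls)
        + ((1 - ρ) / s) * (A.mulVec (x0 - xs) ⬝ᵥ A.mulVec (x0 - xs))
        - (((2 - σ) / σ) * ((Sum.elim x0 l0 - Sum.elim x1 l1) ⬝ᵥ
              Gt.mulVec (Sum.elim x0 l0 - Sum.elim x1 l1))
          + ((1 - ρ) * (2 - σ)) / (s * σ) *
              (A.mulVec (x0 - x1) ⬝ᵥ A.mulVec (x0 - x1))) := by
  -- symmetry of the bilinear form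
  have hB : ∀ u v : (Fin n ⊕ Fin m) → ℝ,
      u ⬝ᵥ Gt.mulVec v = v ⬝ᵥ Gt.mulVec u := by
    intro u v
    rw [Matrix.dotProduct_mulVec, ← Matrix.mulVec_transpose, hGt.eq, dotProduct_comm]
  have hW1 : Sum.elim x1 l1 = Sum.elim x0 l0 - σ • (Sum.elim x0 l0 - Sum.elim xt lt) := by
    funext i; cases i <;> simp [hx, hl]
  set W0 : (Fin n ⊕ Fin m) → ℝ := Sum.elim x0 l0
  set Ws : (Fin n ⊕ Fin m) → ℝ := Sum.elim xs ls
  set Wt : (Fin n ⊕ Fin m) → ℝ := Sum.elim xt lt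
  set a : (Fin n ⊕ Fin m) → ℝ := W0 - Ws with ha
  set D : (Fin n ⊕ Fin m) → ℝ := W0 - Wt with hD
  have hWsub : Sum.elim x1 l1 - Ws = a - σ • D := by rw [hW1, ha, hD]; abel
  have hWsub2 : W0 - Sum.elim x1 l1 = σ • D := by rw [hW1]; abel
  have hWsub3 : Ws - Wt = D - a := by rw [ha, hD]; abel
  set p : Fin m → ℝ := A.mulVec (x0 - xs) with hp
  set q : Fin m → ℝ := A.mulVec x0 - A.mulVec xt with hq
  have hq1 : A.mulVec x1 - A.mulVec x0 = -(σ • q) := by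
    rw [hx, hq]; simp only [Matrix.mulVec_sub, Matrix.mulVec_smul]; abel
  have hq2 : A.mulVec (x1 - xs) = p - σ • q := by
    rw [hx, hp, hq]; simp only [Matrix.mulVec_sub, Matrix.mulVec_smul]; abel
  have hq3 : A.mulVec (x0 - x1) = σ • q := by
    rw [hx, hq]; simp only [Matrix.mulVec_sub, Matrix.mulVec_smul]; abel
  have hq4 : A.mulVec xs - A.mulVec xt = q - p := by
    rw [hp, hq]; simp only [Matrix.mulVec_sub]; abel
  have hWsub4 : Sum.elim x1 l1 - W0 = -(σ • D) := by rw [hW1]; abel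
  rw [hWsub, hWsub2, hq2, hq3]
  rw [hWsub3, hWsub4, hq1, hq4] at h
  have hc : 0 ≤ (1 - ρ) / s := div_nonneg (by linarith) hs.le
  set c : ℝ := (1 - ρ) / s with hcdef
  have hσ' : σ ≠ 0 := ne_of_gt hσ0
  have hrw : (1 - ρ) * (2 - σ) / (s * σ) = c * (2 - σ) / σ := by
    rw [hcdef]; field_simp
  rw [hrw]
  have hgl : (2 - σ) / σ * ((σ • D) ⬝ᵥ Gt.mulVec (σ • D))
      = (2 - σ) * σ * (D ⬝ᵥ Gt.mulVec D) := by
    simp only [Matrix.mulVec_smul, smul_dotProduct, dotProduct_smul, smul_eq_mul]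
    field_simp
  have hgq : c * (2 - σ) / σ * ((σ • q) ⬝ᵥ (σ • q))
      = c * (2 - σ) * σ * (q ⬝ᵥ q) := by
    simp only [smul_dotProduct, dotProduct_smul, smul_eq_mul]
    field_simp
  rw [hgl, hgq]
  -- expand bilinearly
  simp only [Matrix.mulVec_sub, Matrix.mulVec_smul, Matrix.mulVec_neg, sub_dotProduct,
    dotProduct_sub, smul_dotProduct, dotProduct_smul, smul_eq_mul, dotProduct_neg,
    neg_dotProduct] at h ⊢
  have hsym := hB D a
  have hqp : q ⬝ᵥ p = p ⬝ᵥ q := dotProduct_comm _ _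
  have hh : 0 ≤ a ⬝ᵥ Gt.mulVec D + c * (p ⬝ᵥ q)
      - (D ⬝ᵥ Gt.mulVec D + c * (q ⬝ᵥ q)) := by nlinarith [h, hσ0]
  rw [hsym, hqp]
  nlinarith [mul_nonneg hσ0.le hh]
end

section
/- Let f be convex on a convex set M ⊆ ℝ^d and J: ℝ^d → ℝ^d satisfy ⟨w − w̄, J(w) − J(w̄)⟩ = 0 for all w, w̄. Suppose points w̃^0, …, w̃^t ∈ M (with x-components x̃^k) satisfy, for every w ∈ M and every k, f(x) − f(x̃^k) + ⟨w − w̃^k, J(w)⟩ ≥ ⟨w − w̃^k, G(w^k − w̃^k)⟩ where w^{k+1} = w^k − σ(w^k − w̃^k), σ ∈ (0,2), and G is symmetric positive semidefinite. Then the ergodic averages w_t = (1/(t+1))Σ_{k=0}^t w̃^k and x_t = (1/(t+1))Σ_{k=0}^t x̃^k satisfy, for all w ∈ M: f(x_t) − f(x) + ⟨w_t − w, J(w)⟩ ≤ (1/(2σ(t+1)))‖w^0 − w‖²_G. -/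
open Matrix

/-- Ergodic `O(1/t)` convergence rate for the relaxed proximal point method
applied to the variational inequality `VI(f, J, M)` (Theorem 1, second item).
Here the variable `w` carries its `x`-component, i.e. `f` is regarded as a
convex function of the full variable `w`. -/
theorem stmt12_ergodic_rate
    (d : ℕ) (M : Set (Fin d → ℝ)) (hM : Convex ℝ M)
    (f : (Fin d → ℝ) → ℝ) (hf : ConvexOn ℝ M f)
    (J : (Fin d → ℝ) → (Fin d → ℝ))
    (hJ : ∀ w wbar : Fin d → ℝ, (w - wbar) ⬝ᵥ (J w - J wbar) = 0)
    (G : Matrix (Fin d) (Fin d) ℝ) (hG : G.PosSemidef)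
    (σ : ℝ) (hσ0 : 0 < σ) (hσ2 : σ < 2)
    (w wt : ℕ → Fin d → ℝ)
    (hrec : ∀ k, w (k + 1) = w k - σ • (w k - wt k))
    (hmem : ∀ k, wt k ∈ M)
    (hVI : ∀ u ∈ M, ∀ k,
        (u - wt k) ⬝ᵥ G.mulVec (w k - wt k) ≤ f u - f (wt k) + (u - wt k) ⬝ᵥ J u)
    (t : ℕ)
    (wbar : Fin d → ℝ)
    (hwbar : wbar = (1 / ((t : ℝ) + 1)) • ∑ k ∈ Finset.range (t + 1), wt k) :
    ∀ u ∈ M, f wbar - f u + (wbar - u) ⬝ᵥ J u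
      ≤ (1 / (2 * σ * ((t : ℝ) + 1))) * ((w 0 - u) ⬝ᵥ G.mulVec (w 0 - u)) := by
  intro u hu
  have ht : (0:ℝ) < (t:ℝ) + 1 := by positivity
  set Q : (Fin d → ℝ) → ℝ := fun x => x ⬝ᵥ G.mulVec x with hQdef
  have hGsymm : ∀ x y : Fin d → ℝ, x ⬝ᵥ G.mulVec y = y ⬝ᵥ G.mulVec x := by
    intro x y
    rw [Matrix.dotProduct_mulVec, ← Matrix.mulVec_transpose]
    rw [show Gᵀ = G from hG.1]
    exact dotProduct_comm _ _
  have hQ0 : ∀ x, 0 ≤ Q x := fun x => by simpa using hG.dotProduct_mulVec_nonneg x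
  -- per-step inequality
  have hstep : ∀ k, Q (w (k+1) - u) - Q (w k - u)
      ≤ 2*σ*(f u - f (wt k) + (u - wt k) ⬝ᵥ J u) := by
    intro k
    have hv := hVI u hu k
    have hexp : Q (w (k+1) - u) = Q (w k - u)
        - 2*σ*((w k - u) ⬝ᵥ G.mulVec (w k - wt k)) + σ^2 * Q (w k - wt k) := by
      rw [hrec k]
      have h1 : w k - σ • (w k - wt k) - u = (w k - u) - σ • (w k - wt k) := by
        module
      rw [h1]
      simp only [hQdef, Matrix.mulVec_sub, Matrix.mulVec_smul, sub_dotProduct,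
        dotProduct_sub, smul_dotProduct, dotProduct_smul, smul_eq_mul]
      rw [hGsymm (w k) u, hGsymm (wt k) (w k), hGsymm (wt k) u]
      ring
    have h2 : (u - wt k) ⬝ᵥ G.mulVec (w k - wt k)
        = Q (w k - wt k) - (w k - u) ⬝ᵥ G.mulVec (w k - wt k) := by
      have h3 : u - wt k = (w k - wt k) - (w k - u) := by module
      rw [h3, sub_dotProduct]
    nlinarith [hQ0 (w k - wt k), mul_pos hσ0 (sub_pos.mpr hσ2)]
  -- telescoping sum
  have htel : - Q (w 0 - u)
      ≤ 2*σ* ∑ k ∈ Finset.range (t+1), (f u - f (wt k) + (u - wt k) ⬝ᵥ J u) := by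
    have h4 : Q (w (t+1) - u) - Q (w 0 - u)
        ≤ ∑ k ∈ Finset.range (t+1), (2*σ*(f u - f (wt k) + (u - wt k) ⬝ᵥ J u)) := by
      rw [← Finset.sum_range_sub (fun k => Q (w k - u)) (t+1)]
      exact Finset.sum_le_sum fun k _ => hstep k
    rw [← Finset.mul_sum] at h4
    have := hQ0 (w (t+1) - u)
    linarith
  -- simplify the sum
  have hS : ∑ k ∈ Finset.range (t+1), wt k = ((t:ℝ)+1) • wbar := by
    rw [hwbar, smul_smul]
    rw [mul_one_div, div_self ht.ne', one_smul]
  have hsum : ∑ k ∈ Finset.range (t+1), (f u - f (wt k) + (u - wt k) ⬝ᵥ J u)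
      = ((t:ℝ)+1) * f u - (∑ k ∈ Finset.range (t+1), f (wt k))
        + ((t:ℝ)+1) * ((u - wbar) ⬝ᵥ J u) := by
    have hdsum : ∀ (v : ℕ → Fin d → ℝ),
        (∑ k ∈ Finset.range (t+1), v k) ⬝ᵥ J u = ∑ k ∈ Finset.range (t+1), v k ⬝ᵥ J u := by
      intro v
      simp only [dotProduct, Finset.sum_apply, Finset.sum_mul]
      exact Finset.sum_comm
    rw [Finset.sum_add_distrib, Finset.sum_sub_distrib, ← hdsum]
    have h5 : ∑ k ∈ Finset.range (t+1), (u - wt k) = ((t:ℝ)+1) • (u - wbar) := by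
      rw [Finset.sum_sub_distrib, Finset.sum_const, Finset.card_range, hS]
      rw [smul_sub]
      congr 1
      rw [← Nat.cast_smul_eq_nsmul ℝ, Nat.cast_add, Nat.cast_one]
    rw [h5, smul_dotProduct, smul_eq_mul]
    simp [Finset.sum_const, Finset.card_range, mul_comm]
  -- Jensen
  have hjensen : f wbar ≤ (1/((t:ℝ)+1)) * ∑ k ∈ Finset.range (t+1), f (wt k) := by
    have h6 := hf.map_sum_le (t := Finset.range (t+1)) (w := fun _ => 1/((t:ℝ)+1))
      (p := wt) (fun i _ => by positivity)
      (by simp [Finset.sum_const, Finset.card_range]; field_simp)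
      (fun i _ => hmem i)
    rw [← Finset.smul_sum, ← hwbar] at h6
    simpa [Finset.mul_sum, smul_eq_mul] using h6
  -- finish
  rw [hsum] at htel
  rw [mul_comm (1 / (2 * σ * ((t:ℝ)+1)))]
  rw [← div_eq_mul_one_div, le_div_iff₀ (by positivity)]
  have h7 : (wbar - u) ⬝ᵥ J u = -((u - wbar) ⬝ᵥ J u) := by
    rw [show wbar - u = -(u - wbar) by module, neg_dotProduct]
  rw [h7]
  have hj2 : f wbar * ((t:ℝ)+1) ≤ ∑ k ∈ Finset.range (t+1), f (wt k) :=
    (le_div_iff₀ ht).mp (by rwa [one_div_mul_eq_div] at hjensen)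
  nlinarith [mul_le_mul_of_nonneg_left hj2 (le_of_lt (mul_pos two_pos hσ0))]
end
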